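/- Let S, S̃ be subspaces of ℝ^n of dimension n−d (with d ≤ n), and let W, W̃ ∈ ℝ^{d×n} be matrices of full rank d with ker W = S and ker W̃ = S̃. Then the following are equivalent: (1) sign(S) = sign(S̃), and a nonzero sign vector τ ∈ sign(S⊥) has minimal support if and only if its zero set τ⁰ has exactly d−1 elements; (2) either det(W_I)·det(W̃_I) > 0 for all subsets I ⊆ {1,…,n} of cardinality d, or det(W_I)·det(W̃_I) < 0 for all such subsets I. -/

import Mathlib

/-!
Both conditions force all maximal minors of `W` to be nonzero. Then a nonzero covector `Wᵀ l` has
at most `d - 1` zeros, and it has minimal support iff it has exactly `d - 1`: with fewer zeros,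
some nonzero covector vanishes on them and on one more coordinate. A vanishing minor, on the other
hand, yields a covector with `d` zeros, and no covector of smaller support can have only `d - 1`.
Among vectors supported on `d + 1` columns `g`, the kernel of `W` is spanned by the circuit whose
`k`-th entry is `(-1)^k` times the minor on `g ∘ succAbove k`.

If all products of corresponding minors have the same sign, the circuits of `W` and `W̃` have the
same sign vectors. Every kernel vector of `W` is the composition of a kernel vector of smaller
support with a circuit, so `sign(ker W) ⊆ sign(ker W̃)` by induction on the support. Conversely, if
`sign(ker W) = sign(ker W̃)` then the circuits of `W` and `W̃` on the same columns are proportional,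
so the sign of `minor W * minor W̃` is the same for any two `d`-subsets of a `(d + 1)`-subset, and
any two `d`-subsets are linked by such exchanges.
-/

open scoped BigOperators

noncomputable section

/-- The generalized exponential map `F_c(x) = ∑ i, c_i exp(w̃^i · x) w^i`. -/
def Fmap {d dt n : ℕ} (W : Matrix (Fin d) (Fin n) ℝ) (Wt : Matrix (Fin dt) (Fin n) ℝ)
    (c : Fin n → ℝ) (x : Fin dt → ℝ) : Fin d → ℝ :=
  fun i => ∑ j, c j * Real.exp (∑ k, Wt k j * x k) * W i j

/-- The polyhedral cone generated by the columns of `W`. -/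
def coneOf {d n : ℕ} (W : Matrix (Fin d) (Fin n) ℝ) : Set (Fin d → ℝ) :=
  {y | ∃ u : Fin n → ℝ, (∀ j, 0 ≤ u j) ∧ y = fun i => ∑ j, u j * W i j}

/-- The componentwise sign vector. -/
def signVec {n : ℕ} (x : Fin n → ℝ) : Fin n → SignType := fun i => SignType.sign (x i)

/-- The set of sign vectors of a set of real vectors. -/
def signSet {n : ℕ} (T : Set (Fin n → ℝ)) : Set (Fin n → SignType) := signVec '' T

/-- The kernel of (the linear map given by) a matrix, as a set. -/
def kerSet {d n : ℕ} (W : Matrix (Fin d) (Fin n) ℝ) : Set (Fin n → ℝ) :=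
  {x | W.mulVec x = 0}

/-- The orthogonal complement (w.r.t. the standard inner product) of a set in `ℝ^n`. -/
def orthSet {n : ℕ} (T : Set (Fin n → ℝ)) : Set (Fin n → ℝ) :=
  {v | ∀ u ∈ T, ∑ i, u i * v i = 0}

/-- The `d×d` minor of a `d×n` matrix given by a choice `f` of `d` columns. -/
def minor {d n : ℕ} (W : Matrix (Fin d) (Fin n) ℝ) (f : Fin d → Fin n) : ℝ :=
  (W.submatrix id f).det

/-- A nonzero element of a set of sign vectors has (inclusion-)minimal support. -/
def hasMinSupport {n : ℕ} (T : Set (Fin n → SignType)) (τ : Fin n → SignType) : Prop :=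
  ∀ τ' ∈ T, τ' ≠ 0 → {i | τ' i ≠ 0} ⊆ {i | τ i ≠ 0} → {i | τ' i ≠ 0} = {i | τ i ≠ 0}

open Matrix Filter Topology

namespace SignVector

variable {m d n : ℕ}

lemma sign_eq_sign_of_mul_pos {a b : ℝ} (h : 0 < a * b) : SignType.sign a = SignType.sign b := by
  rcases mul_pos_iff.mp h with ⟨ha, hb⟩ | ⟨ha, hb⟩
  · rw [sign_pos ha, sign_pos hb]
  · rw [sign_neg ha, sign_neg hb]

lemma mul_pos_of_sign_eq {a b : ℝ} (ha : a ≠ 0) (h : SignType.sign a = SignType.sign b) :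
    0 < a * b := by
  rw [← sign_eq_one_iff, sign_mul, ← h]
  rcases ha.lt_or_gt with ha | ha <;> simp [sign_neg, sign_pos, ha]

lemma sign_add_eq_of_abs_le {a b : ℝ} (h : |b| ≤ |a|) (hab : a + b ≠ 0) :
    SignType.sign (a + b) = SignType.sign a := by
  rcases lt_trichotomy a 0 with ha | rfl | ha
  · rw [abs_of_neg ha] at h
    have : a + b < 0 := lt_of_le_of_ne (by linarith [le_abs_self b]) hab
    rw [sign_neg this, sign_neg ha]
  · simp_all
  · rw [abs_of_pos ha] at h
    have : 0 < a + b := lt_of_le_of_ne' (by linarith [neg_abs_le b]) hab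
    rw [sign_pos this, sign_pos ha]

lemma signVec_apply_eq_zero {x : Fin n → ℝ} {j : Fin n} : signVec x j = 0 ↔ x j = 0 :=
  sign_eq_zero_iff

lemma signVec_eq_zero {x : Fin n → ℝ} : signVec x = 0 ↔ x = 0 := by
  simp only [funext_iff, Pi.zero_apply, signVec_apply_eq_zero]

lemma signVec_zero : signVec (0 : Fin n → ℝ) = 0 :=
  signVec_eq_zero.mpr rfl

lemma signVec_smul (s : ℝ) (x : Fin n → ℝ) :
    signVec (s • x) = fun j => SignType.sign s * signVec x j :=
  funext fun j => sign_mul s (x j)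

/-- The composition `σ ∘ τ` of sign vectors, as in oriented matroid theory. -/
def signComp (σ τ : Fin n → SignType) : Fin n → SignType :=
  fun i => if σ i = 0 then τ i else σ i

lemma signComp_eq_zero_iff {σ τ : Fin n → SignType} {i : Fin n} :
    signComp σ τ i = 0 ↔ σ i = 0 ∧ τ i = 0 := by
  unfold signComp
  split_ifs <;> simp_all

lemma eq_zero_of_signVec_eq_signComp {x y z : Fin n → ℝ}
    (h : signVec x = signComp (signVec y) (signVec z)) {j : Fin n} (hx : x j = 0) : y j = 0 := by
  rw [← signVec_apply_eq_zero, h, signComp_eq_zero_iff] at hx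
  exact signVec_apply_eq_zero.mp hx.1

lemma signVec_eq_signComp_sub {x y : Fin n → ℝ} (h : ∀ j, |y j| ≤ |x j|) :
    signVec x = signComp (signVec (x - y)) (signVec y) := by
  funext j
  simp only [signComp, signVec, Pi.sub_apply, sign_eq_zero_iff]
  split_ifs with hxy
  · rw [sub_eq_zero.mp hxy]
  · rw [sub_eq_add_neg] at hxy ⊢
    exact (sign_add_eq_of_abs_le (by rw [abs_neg]; exact h j) hxy).symm

/-- Subtracting the multiple of `c` that cancels the entry of `x` of least ratio `|x j / c j|`
leaves a vector conformal to `x`. -/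
lemma exists_signVec_eq_signComp_sub_smul (x : Fin n → ℝ) {c : Fin n → ℝ} (hc : c ≠ 0) :
    ∃ s : ℝ, ∃ j₀, c j₀ ≠ 0 ∧ x j₀ = s * c j₀ ∧
      signVec x = signComp (signVec (x - s • c)) (signVec (s • c)) := by
  have hne : (Finset.univ.filter (c · ≠ 0)).Nonempty := by
    obtain ⟨j, hj⟩ := Function.ne_iff.mp hc
    exact ⟨j, by simpa using hj⟩
  obtain ⟨j₀, hj₀, hmin⟩ :=
    (Finset.univ.filter (c · ≠ 0)).exists_min_image (fun j => |x j / c j|) hne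
  have hcj₀ : c j₀ ≠ 0 := (Finset.mem_filter.mp hj₀).2
  refine ⟨x j₀ / c j₀, j₀, hcj₀, (div_mul_cancel₀ _ hcj₀).symm, signVec_eq_signComp_sub fun j => ?_⟩
  by_cases hcj : c j = 0
  · simp [hcj]
  · have := hmin j (by simpa using hcj)
    rw [Pi.smul_apply, smul_eq_mul, abs_mul]
    calc |x j₀ / c j₀| * |c j| ≤ |x j / c j| * |c j| := by gcongr
      _ = |x j| := by rw [← abs_mul, div_mul_cancel₀ _ hcj]

lemma exists_signVec_add_smul_eq_signComp (a b : Fin n → ℝ) :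
    ∃ t : ℝ, 0 < t ∧ signVec (a + t • b) = signComp (signVec a) (signVec b) := by
  have hsmall : ∀ j, ∀ᶠ t in 𝓝[>] (0 : ℝ), a j ≠ 0 → |t * b j| < |a j| := by
    intro j
    by_cases ha : a j = 0
    · simp [ha]
    · have : Tendsto (fun t : ℝ => |t * b j|) (𝓝[>] 0) (𝓝 0) :=
        ((by fun_prop : Continuous fun t : ℝ => |t * b j|).tendsto' 0 0 (by simp)).mono_left
          nhdsWithin_le_nhds
      filter_upwards [this.eventually_lt_const (abs_pos.mpr ha)] with t ht _ using ht
  obtain ⟨t, ht, ht0⟩ := ((eventually_all.mpr hsmall).and eventually_mem_nhdsWithin).exists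
  refine ⟨t, ht0, funext fun j => ?_⟩
  simp only [signComp, signVec, Pi.add_apply, Pi.smul_apply, smul_eq_mul, sign_eq_zero_iff]
  split_ifs with ha
  · rw [ha, zero_add, sign_mul, sign_pos (Set.mem_Ioi.mp ht0), one_mul]
  · refine sign_add_eq_of_abs_le (ht j ha).le fun h => (ht j ha).ne ?_
    rw [eq_neg_of_add_eq_zero_right h, abs_neg]

lemma mulVec_eq_submatrix_mulVec_comp (W : Matrix (Fin d) (Fin n) ℝ) {f : Fin m → Fin n}
    (hf : Function.Injective f) {x : Fin n → ℝ} (hx : ∀ j, x j ≠ 0 → j ∈ Set.range f) :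
    W *ᵥ x = W.submatrix id f *ᵥ (x ∘ f) := by
  funext i
  simp only [mulVec, dotProduct, submatrix_apply, id_eq, Function.comp_apply]
  refine (Fintype.sum_of_injective f hf _ _ (fun j hj => ?_) fun k => rfl).symm
  by_contra h
  exact hj (hx j (right_ne_zero_of_mul h))

lemma mulVec_extend (W : Matrix (Fin d) (Fin n) ℝ) {f : Fin m → Fin n}
    (hf : Function.Injective f) (v : Fin m → ℝ) :
    W *ᵥ Function.extend f v 0 = W.submatrix id f *ᵥ v := by
  rw [mulVec_eq_submatrix_mulVec_comp W hf, Function.extend_comp hf]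
  intro j hj
  by_contra h
  exact hj (Function.extend_apply' _ _ _ h)

lemma eq_zero_of_mulVec_eq_zero_of_support_subset {W : Matrix (Fin d) (Fin n) ℝ}
    {f : Fin d → Fin n} (hf : Function.Injective f) (hminor : minor W f ≠ 0)
    {x : Fin n → ℝ} (hx : W *ᵥ x = 0) (hsupp : ∀ j, x j ≠ 0 → j ∈ Set.range f) : x = 0 := by
  rw [mulVec_eq_submatrix_mulVec_comp W hf hsupp] at hx
  have hxf := eq_zero_of_mulVec_eq_zero hminor hx
  funext j
  by_contra hj
  obtain ⟨k, rfl⟩ := hsupp j hj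
  exact hj (congrFun hxf k)

lemma orthSet_ker_eq_range (W : Matrix (Fin d) (Fin n) ℝ) :
    orthSet (LinearMap.ker W.mulVecLin : Set (Fin n → ℝ)) = Set.range Wᵀ.mulVec := by
  have horth : ((toBilin' 1).orthogonal (LinearMap.ker W.mulVecLin) : Set (Fin n → ℝ)) =
      orthSet (LinearMap.ker W.mulVecLin : Set (Fin n → ℝ)) := by
    ext v
    simp [LinearMap.BilinForm.mem_orthogonal_iff, orthSet, toBilin'_apply', dotProduct]
  have hle : LinearMap.range Wᵀ.mulVecLin ≤
      (toBilin' 1).orthogonal (LinearMap.ker W.mulVecLin) := by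
    rintro - ⟨l, rfl⟩ u hu
    simp only [LinearMap.mem_ker, mulVecLin_apply] at hu
    simp [toBilin'_apply', dotProduct_comm u, ← dotProduct_mulVec, hu]
  have heq : LinearMap.range Wᵀ.mulVecLin =
      (toBilin' 1).orthogonal (LinearMap.ker W.mulVecLin) := by
    refine Submodule.eq_of_le_of_finrank_le hle ?_
    rw [LinearMap.BilinForm.finrank_orthogonal
      (LinearMap.BilinForm.nondegenerate_toBilin'_iff_det_ne_zero.mpr (by simp)),
      ← Matrix.rank, Matrix.rank_transpose]
    have := LinearMap.finrank_range_add_finrank_ker W.mulVecLin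
    rw [← Matrix.rank] at this
    simp only [Module.finrank_fin_fun] at this ⊢
    omega
  rw [← horth, ← heq]
  rfl

lemma transpose_mulVec_ne_zero {W : Matrix (Fin d) (Fin n) ℝ} (hW : W.rank = d)
    {l : Fin d → ℝ} (hl : l ≠ 0) : Wᵀ *ᵥ l ≠ 0 := by
  have h := LinearMap.finrank_range_add_finrank_ker Wᵀ.mulVecLin
  rw [← Matrix.rank, rank_transpose, hW, Module.finrank_fin_fun, add_eq_left,
    Submodule.finrank_eq_zero] at h
  exact fun h0 => hl (LinearMap.ker_eq_bot.mp h (h0.trans (map_zero _).symm))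

lemma exists_ne_zero_transpose_mulVec_eq_zero_on (W : Matrix (Fin d) (Fin n) ℝ)
    {Z : Finset (Fin n)} (hZ : Z.card < d) :
    ∃ l ≠ 0, ∀ j ∈ Z, (Wᵀ *ᵥ l) j = 0 := by
  have hker : LinearMap.ker (LinearMap.funLeft ℝ ℝ ((↑) : Z → Fin n) ∘ₗ Wᵀ.mulVecLin) ≠ ⊥ :=
    LinearMap.ker_ne_bot_of_finrank_lt (by simpa using hZ)
  obtain ⟨l, hl, hl0⟩ := (Submodule.ne_bot_iff _).mp hker
  exact ⟨l, hl0, fun j hj => congrFun hl ⟨j, hj⟩⟩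

lemma mem_signSet_ker {W : Matrix (Fin d) (Fin n) ℝ} {τ : Fin n → SignType} :
    τ ∈ signSet (LinearMap.ker W.mulVecLin : Set (Fin n → ℝ)) ↔
      ∃ x, W *ᵥ x = 0 ∧ signVec x = τ := by
  simp [signSet]

def cofactorVec (M : Matrix (Fin d) (Fin (d + 1)) ℝ) : Fin (d + 1) → ℝ :=
  fun k => (-1) ^ (k : ℕ) * (M.submatrix id k.succAbove).det

lemma mulVec_cofactorVec (M : Matrix (Fin d) (Fin (d + 1)) ℝ) : M *ᵥ cofactorVec M = 0 := by
  funext i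
  -- expand along its first row the matrix `M` with row `i` repeated on top
  have hB := det_succ_row_zero (M.submatrix (Fin.cons i id : Fin (d + 1) → Fin d) id)
  rw [det_zero_of_row_eq (i := 0) (j := i.succ) (Fin.succ_ne_zero i).symm (by funext; simp)] at hB
  rw [Pi.zero_apply, hB]
  simp only [mulVec, dotProduct, cofactorVec, submatrix_submatrix]
  refine Finset.sum_congr rfl fun k _ => ?_
  simp
  ring

def circuit (W : Matrix (Fin d) (Fin n) ℝ) (g : Fin (d + 1) → Fin n) : Fin n → ℝ :=
  Function.extend g (cofactorVec (W.submatrix id g)) 0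

lemma circuit_apply {W : Matrix (Fin d) (Fin n) ℝ} {g : Fin (d + 1) → Fin n}
    (hg : Function.Injective g) (k : Fin (d + 1)) :
    circuit W g (g k) = (-1) ^ (k : ℕ) * minor W (g ∘ k.succAbove) :=
  hg.extend_apply _ _ k

lemma circuit_apply_mul_circuit_apply {W Wt : Matrix (Fin d) (Fin n) ℝ}
    {g : Fin (d + 1) → Fin n} (hg : Function.Injective g) (k : Fin (d + 1)) :
    circuit W g (g k) * circuit Wt g (g k) =
      minor W (g ∘ k.succAbove) * minor Wt (g ∘ k.succAbove) := by
  rw [circuit_apply hg, circuit_apply hg, mul_mul_mul_comm, ← pow_add, ← two_mul, pow_mul,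
    neg_one_sq, one_pow, one_mul]

lemma mem_range_of_circuit_ne_zero {W : Matrix (Fin d) (Fin n) ℝ} {g : Fin (d + 1) → Fin n}
    {j : Fin n} (hj : circuit W g j ≠ 0) : j ∈ Set.range g := by
  by_contra h
  exact hj (Function.extend_apply' _ _ _ h)

lemma mulVec_circuit (W : Matrix (Fin d) (Fin n) ℝ) {g : Fin (d + 1) → Fin n}
    (hg : Function.Injective g) : W *ᵥ circuit W g = 0 := by
  rw [circuit, mulVec_extend W hg, mulVec_cofactorVec]

lemma exists_strictMono_forall_mem {s : Finset (Fin n)} (h : m ≤ s.card) :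
    ∃ f : Fin m → Fin n, StrictMono f ∧ ∀ k, f k ∈ s := by
  obtain ⟨t, hts, ht⟩ := Finset.exists_subset_card_eq h
  exact ⟨t.orderEmbOfFin ht, (t.orderEmbOfFin ht).strictMono,
    fun k => hts (t.orderEmbOfFin_mem ht k)⟩

lemma exists_strictMono_subset_range (hmn : m ≤ n) {s : Finset (Fin n)} (h : s.card ≤ m) :
    ∃ f : Fin m → Fin n, StrictMono f ∧ ∀ j ∈ s, j ∈ Set.range f := by
  obtain ⟨t, hst, ht⟩ := Finset.exists_superset_card_eq h (by simpa using hmn)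
  refine ⟨t.orderEmbOfFin ht, (t.orderEmbOfFin ht).strictMono, fun j hj => ?_⟩
  rw [Finset.range_orderEmbOfFin]
  exact hst hj

def IsUniform (W : Matrix (Fin d) (Fin n) ℝ) : Prop :=
  ∀ f : Fin d → Fin n, StrictMono f → minor W f ≠ 0

namespace IsUniform

variable {W : Matrix (Fin d) (Fin n) ℝ}

lemma of_pos_mul_minor {Wt : Matrix (Fin d) (Fin n) ℝ} {η : ℝ}
    (hη : ∀ f : Fin d → Fin n, StrictMono f → 0 < η * (minor W f * minor Wt f)) :
    IsUniform W := fun f hf h0 => by simpa [h0] using hη f hf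

lemma circuit_apply_ne_zero (hU : IsUniform W) {g : Fin (d + 1) → Fin n} (hg : StrictMono g)
    (k : Fin (d + 1)) : circuit W g (g k) ≠ 0 := by
  rw [circuit_apply hg.injective]
  exact mul_ne_zero (pow_ne_zero _ (by norm_num)) (hU _ (hg.comp (Fin.strictMono_succAbove k)))

lemma circuit_ne_zero (hU : IsUniform W) {g : Fin (d + 1) → Fin n} (hg : StrictMono g) :
    circuit W g ≠ 0 :=
  fun h => hU.circuit_apply_ne_zero hg 0 (congrFun h _)

lemma lt_card_support (hU : IsUniform W) (hdn : d ≤ n) {x : Fin n → ℝ} (hx : W *ᵥ x = 0)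
    (hx0 : x ≠ 0) : d < (Finset.univ.filter (x · ≠ 0)).card := by
  by_contra! h
  obtain ⟨f, hf, hsupp⟩ := exists_strictMono_subset_range hdn h
  exact hx0 (eq_zero_of_mulVec_eq_zero_of_support_subset hf.injective (hU f hf) hx
    fun j hj => hsupp j (by simpa using hj))

lemma card_zeros_lt (hU : IsUniform W) {l : Fin d → ℝ} (hl : Wᵀ *ᵥ l ≠ 0) :
    (Finset.univ.filter ((Wᵀ *ᵥ l) · = 0)).card < d := by
  by_contra! h
  obtain ⟨f, hf, hzero⟩ := exists_strictMono_forall_mem h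
  have hlf : (W.submatrix id f)ᵀ *ᵥ l = 0 :=
    funext fun k => (Finset.mem_filter.mp (hzero k)).2
  have hdet := hU f hf
  rw [minor, ← det_transpose] at hdet
  exact hl (by rw [eq_zero_of_mulVec_eq_zero hdet hlf, mulVec_zero])

lemma eq_smul_circuit (hU : IsUniform W) {g : Fin (d + 1) → Fin n} (hg : StrictMono g)
    {y : Fin n → ℝ} (hy : W *ᵥ y = 0) (hsupp : ∀ j, y j ≠ 0 → j ∈ Set.range g) :
    ∃ r : ℝ, y = r • circuit W g := by
  set r := y (g 0) / circuit W g (g 0)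
  refine ⟨r, sub_eq_zero.mp ?_⟩
  -- `y - r • circuit W g` vanishes at `g 0`, so it lives on the columns `g ∘ succAbove 0`
  have hg0 := hU.circuit_apply_ne_zero hg 0
  refine eq_zero_of_mulVec_eq_zero_of_support_subset
    (hg.comp (Fin.strictMono_succAbove 0)).injective
    (hU _ (hg.comp (Fin.strictMono_succAbove 0)))
    (by rw [mulVec_sub, mulVec_smul, hy, mulVec_circuit W hg.injective, smul_zero, sub_zero])
    fun j hj => ?_
  have hjg : j ∈ Set.range g := by
    by_contra hjg
    have hyj : y j = 0 := not_not.mp (mt (hsupp j) hjg)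
    exact hj (by simp [hyj, circuit, Function.extend_apply' _ _ _ hjg])
  obtain ⟨k, rfl⟩ := hjg
  have hk : k ≠ 0 := by
    rintro rfl
    exact hj (by simp [r, div_mul_cancel₀ _ hg0])
  obtain ⟨k', rfl⟩ := Fin.exists_succAbove_eq hk
  exact ⟨k', rfl⟩

lemma of_signSet_ker_subset {Wt : Matrix (Fin d) (Fin n) ℝ} (hU : IsUniform W)
    (h : signSet (LinearMap.ker Wt.mulVecLin : Set (Fin n → ℝ)) ⊆
      signSet (LinearMap.ker W.mulVecLin : Set (Fin n → ℝ))) :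
    IsUniform Wt := by
  intro f hf hdet
  obtain ⟨v, hv0, hv⟩ := exists_mulVec_eq_zero_iff.mpr hdet
  obtain ⟨y, hy, hyx⟩ := mem_signSet_ker.mp <| h <| mem_signSet_ker.mpr
    ⟨Function.extend f v 0, by rw [mulVec_extend Wt hf.injective, hv], rfl⟩
  have hy0 : y = 0 := eq_zero_of_mulVec_eq_zero_of_support_subset hf.injective (hU f hf) hy
    fun j hj => by
      by_contra hjf
      apply hj
      rw [← signVec_apply_eq_zero, hyx, signVec_apply_eq_zero, Function.extend_apply' _ _ _ hjf]
      rfl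
  rw [hy0, signVec_zero, eq_comm, signVec_eq_zero] at hyx
  exact hv0 (by rw [← Function.extend_comp hf.injective v 0, hyx]; rfl)

end IsUniform

lemma signVec_smul_circuit {W Wt : Matrix (Fin d) (Fin n) ℝ} {g : Fin (d + 1) → Fin n}
    (hg : Function.Injective g) {η : ℝ}
    (hη : ∀ k : Fin (d + 1), 0 < η * (minor W (g ∘ k.succAbove) * minor Wt (g ∘ k.succAbove))) :
    signVec (η • circuit Wt g) = signVec (circuit W g) := by
  funext j
  by_cases hj : j ∈ Set.range g
  · obtain ⟨k, rfl⟩ := hj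
    refine sign_eq_sign_of_mul_pos ?_
    rw [Pi.smul_apply, smul_eq_mul, mul_assoc, mul_comm (circuit Wt g _),
      circuit_apply_mul_circuit_apply hg]
    exact hη k
  · simp [signVec, circuit, Function.extend_apply' _ _ _ hj]

theorem exists_signVec_eq_of_pos_mul_minor (hdn : d ≤ n) {W Wt : Matrix (Fin d) (Fin n) ℝ}
    {η : ℝ} (hη : ∀ f : Fin d → Fin n, StrictMono f → 0 < η * (minor W f * minor Wt f))
    (x : Fin n → ℝ) (hx : W *ᵥ x = 0) : ∃ y, Wt *ᵥ y = 0 ∧ signVec y = signVec x := by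
  have hU := IsUniform.of_pos_mul_minor hη
  by_cases hx0 : x = 0
  · exact ⟨0, mulVec_zero _, by rw [hx0]⟩
  obtain ⟨g, hg, hgx⟩ := exists_strictMono_forall_mem (hU.lt_card_support hdn hx hx0)
  obtain ⟨s, j₀, hcj₀, hxj₀, hsplit⟩ :=
    exists_signVec_eq_signComp_sub_smul x (hU.circuit_ne_zero hg)
  have hlt : (Finset.univ.filter ((x - s • circuit W g) · ≠ 0)).card <
      (Finset.univ.filter (x · ≠ 0)).card := by
    refine Finset.card_lt_card ⟨fun j => ?_, fun hsub => ?_⟩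
    · simp only [Finset.mem_filter, Finset.mem_univ, true_and]
      exact mt (eq_zero_of_signVec_eq_signComp hsplit)
    · obtain ⟨k, rfl⟩ := mem_range_of_circuit_ne_zero hcj₀
      have := Finset.mem_filter.mp (hsub (hgx k))
      simp [hxj₀] at this
  obtain ⟨w, hw, hsw⟩ := exists_signVec_eq_of_pos_mul_minor hdn hη (x - s • circuit W g)
    (by rw [mulVec_sub, mulVec_smul, hx, mulVec_circuit W hg.injective, smul_zero, sub_zero])
  obtain ⟨t, -, ht⟩ := exists_signVec_add_smul_eq_signComp w (s • η • circuit Wt g)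
  refine ⟨w + t • s • η • circuit Wt g, ?_, ?_⟩
  · simp [mulVec_add, mulVec_smul, hw, mulVec_circuit Wt hg.injective]
  · rw [ht, hsw, hsplit, signVec_smul s (η • _), signVec_smul_circuit hg.injective
      fun k => hη _ (hg.comp (Fin.strictMono_succAbove k)), ← signVec_smul]
termination_by (Finset.univ.filter (x · ≠ 0)).card

lemma signSet_ker_subset_of_pos_mul_minor (hdn : d ≤ n) {W Wt : Matrix (Fin d) (Fin n) ℝ}
    {η : ℝ} (hη : ∀ f : Fin d → Fin n, StrictMono f → 0 < η * (minor W f * minor Wt f)) :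
    signSet (LinearMap.ker W.mulVecLin : Set (Fin n → ℝ)) ⊆
      signSet (LinearMap.ker Wt.mulVecLin : Set (Fin n → ℝ)) := by
  intro τ hτ
  obtain ⟨x, hx, rfl⟩ := mem_signSet_ker.mp hτ
  exact mem_signSet_ker.mpr (exists_signVec_eq_of_pos_mul_minor hdn hη x hx)

lemma sign_mul_minor_eq_of_signSet_ker_subset {W Wt : Matrix (Fin d) (Fin n) ℝ}
    (hUW : IsUniform W) (hUWt : IsUniform Wt)
    (h : signSet (LinearMap.ker W.mulVecLin : Set (Fin n → ℝ)) ⊆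
      signSet (LinearMap.ker Wt.mulVecLin : Set (Fin n → ℝ)))
    {g : Fin (d + 1) → Fin n} (hg : StrictMono g) (k k' : Fin (d + 1)) :
    SignType.sign (minor W (g ∘ k.succAbove) * minor Wt (g ∘ k.succAbove)) =
      SignType.sign (minor W (g ∘ k'.succAbove) * minor Wt (g ∘ k'.succAbove)) := by
  obtain ⟨y, hy, hyx⟩ := mem_signSet_ker.mp <| h <| mem_signSet_ker.mpr
    ⟨circuit W g, mulVec_circuit W hg.injective, rfl⟩
  obtain ⟨r, rfl⟩ := hUWt.eq_smul_circuit hg hy fun j hj => by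
    rw [Ne, ← signVec_apply_eq_zero, hyx, signVec_apply_eq_zero] at hj
    exact mem_range_of_circuit_ne_zero hj
  -- comparing the circuits of `W` and `Wt` entrywise, every product of minors has the sign of `r`
  have hr : ∀ k : Fin (d + 1),
      SignType.sign r = SignType.sign (minor W (g ∘ k.succAbove) * minor Wt (g ∘ k.succAbove)) := by
    intro k
    have hpos := mul_pos_of_sign_eq (hUW.circuit_apply_ne_zero hg k) (congrFun hyx (g k)).symm
    rw [Pi.smul_apply, smul_eq_mul, mul_left_comm,
      circuit_apply_mul_circuit_apply hg.injective] at hpos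
    exact sign_eq_sign_of_mul_pos hpos
  rw [← hr, ← hr]

/-- The exchange `I ↦ insert b (I.erase a)` with `a ∈ I \ I'`, `b ∈ I' \ I` stays inside the
`(d + 1)`-subset `insert b I` and decreases `|I \ I'|`. -/
theorem eq_of_forall_erase_eq {α β : Type*} [DecidableEq α] {F : Finset α → β}
    (hF : ∀ J : Finset α, J.card = d + 1 → ∀ a ∈ J, ∀ b ∈ J, F (J.erase a) = F (J.erase b))
    {I I' : Finset α} (hI : I.card = d) (hI' : I'.card = d) : F I = F I' := by
  by_cases hsub : I ⊆ I'
  · rw [Finset.eq_of_subset_of_card_le hsub (hI'.trans hI.symm).le]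
  obtain ⟨a, haI, haI'⟩ := Finset.not_subset.mp hsub
  obtain ⟨b, hbI', hbI⟩ : ∃ b ∈ I', b ∉ I := by
    by_contra! h
    exact hsub (Finset.eq_of_subset_of_card_le h (hI.trans hI'.symm).le).ge
  have hJ : (insert b I).card = d + 1 := by rw [Finset.card_insert_of_notMem hbI, hI]
  have hlt : ((insert b I).erase a \ I').card < (I \ I').card := by
    refine Finset.card_lt_card ⟨fun j => ?_, fun h => ?_⟩
    · simp only [Finset.mem_sdiff, Finset.mem_erase, Finset.mem_insert]
      rintro ⟨⟨-, rfl | hj⟩, hj'⟩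
      · exact absurd hbI' hj'
      · exact ⟨hj, hj'⟩
    · simpa using h (Finset.mem_sdiff.mpr ⟨haI, haI'⟩)
  calc F I = F ((insert b I).erase b) := by rw [Finset.erase_insert hbI]
    _ = F ((insert b I).erase a) :=
      hF _ hJ b (Finset.mem_insert_self b I) a (Finset.mem_insert_of_mem haI)
    _ = F I' := eq_of_forall_erase_eq hF (by
      rw [Finset.card_erase_of_mem (Finset.mem_insert_of_mem haI), hJ, Nat.add_sub_cancel]) hI'
termination_by (I \ I').card

lemma image_comp_succAbove {g : Fin (d + 1) → Fin n} (hg : Function.Injective g)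
    (k : Fin (d + 1)) :
    Finset.univ.image (g ∘ k.succAbove) = (Finset.univ.image g).erase (g k) := by
  ext j
  simp only [Finset.mem_image, Finset.mem_univ, true_and, Function.comp_apply,
    Finset.mem_erase]
  constructor
  · rintro ⟨r, rfl⟩
    exact ⟨fun h => k.succAbove_ne r (hg h), _, rfl⟩
  · rintro ⟨hjk, r, rfl⟩
    obtain ⟨r', rfl⟩ := Fin.exists_succAbove_eq (fun h : r = k => hjk (h ▸ rfl))
    exact ⟨r', rfl⟩

theorem eq_of_strictMono_of_forall_succAbove {β : Type*} {F : (Fin d → Fin n) → β}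
    (hF : ∀ g : Fin (d + 1) → Fin n, StrictMono g → ∀ k k' : Fin (d + 1),
      F (g ∘ k.succAbove) = F (g ∘ k'.succAbove))
    {f f' : Fin d → Fin n} (hf : StrictMono f) (hf' : StrictMono f') : F f = F f' := by
  -- `F` read as a function of the set of selected columns
  let G : Finset (Fin n) → β := fun I => if h : I.card = d then F (I.orderEmbOfFin h) else F f
  have hcard : ∀ {f : Fin d → Fin n}, StrictMono f → (Finset.univ.image f).card = d :=
    fun hf => by rw [Finset.card_image_of_injective _ hf.injective, Finset.card_fin]
  have hG : ∀ {f : Fin d → Fin n}, StrictMono f → G (Finset.univ.image f) = F f := by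
    intro f hf
    simp only [G, dif_pos (hcard hf)]
    rw [← Finset.orderEmbOfFin_unique (hcard hf)
      (fun k => Finset.mem_image_of_mem f (Finset.mem_univ k)) hf]
  rw [← hG hf, ← hG hf']
  refine eq_of_forall_erase_eq (fun J hJ a ha b hb => ?_) (hcard hf) (hcard hf')
  set g := J.orderEmbOfFin hJ
  have hgJ : Finset.univ.image g = J := by
    rw [← Finset.coe_inj, Finset.coe_image, Finset.coe_univ, Set.image_univ,
      Finset.range_orderEmbOfFin]
  obtain ⟨ka, rfl⟩ : a ∈ Set.range g := by rwa [Finset.range_orderEmbOfFin]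
  obtain ⟨kb, rfl⟩ : b ∈ Set.range g := by rwa [Finset.range_orderEmbOfFin]
  rw [← hgJ, ← image_comp_succAbove g.injective, ← image_comp_succAbove g.injective,
    hG (g.strictMono.comp (Fin.strictMono_succAbove _)),
    hG (g.strictMono.comp (Fin.strictMono_succAbove _))]
  exact hF g g.strictMono ka kb

lemma forall_pos_or_forall_neg_of_sign_eq {ι : Type*} {P : ι → Prop} {F : ι → ℝ} {i₀ : ι}
    (hi₀ : P i₀) (hF : ∀ i, P i → F i ≠ 0)
    (h : ∀ i j, P i → P j → SignType.sign (F i) = SignType.sign (F j)) :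
    (∀ i, P i → 0 < F i) ∨ (∀ i, P i → F i < 0) := by
  rcases (hF i₀ hi₀).lt_or_gt with hneg | hpos
  · exact .inr fun i hi => sign_eq_neg_one_iff.mp ((h i i₀ hi hi₀).trans (sign_neg hneg))
  · exact .inl fun i hi => sign_eq_one_iff.mp ((h i i₀ hi hi₀).trans (sign_pos hpos))

lemma exists_hasMinSupport_le (T : Set (Fin n → SignType)) {τ : Fin n → SignType} (hτ : τ ∈ T)
    (hτ0 : τ ≠ 0) :
    ∃ σ ∈ T, σ ≠ 0 ∧ {i | σ i ≠ 0} ⊆ {i | τ i ≠ 0} ∧ hasMinSupport T σ := by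
  obtain ⟨-, hle, ⟨σ, hσ, hσ0, rfl⟩, hmin⟩ := exists_minimal_le_of_wellFoundedLT
    (fun s => ∃ σ ∈ T, σ ≠ 0 ∧ {i | σ i ≠ 0} = s) _ ⟨τ, hτ, hτ0, rfl⟩
  exact ⟨σ, hσ, hσ0, hle, fun σ' hσ' hσ'0 hsub => hsub.antisymm (hmin ⟨σ', hσ', hσ'0, rfl⟩ hsub)⟩

lemma setOf_ne_zero_subset_iff {σ τ : Fin n → SignType} :
    {i | σ i ≠ 0} ⊆ {i | τ i ≠ 0} ↔
      Finset.univ.filter (τ · = 0) ⊆ Finset.univ.filter (σ · = 0) := by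
  simp only [Set.subset_def, Finset.subset_iff, Set.mem_ofPred_eq, Finset.mem_filter,
    Finset.mem_univ, true_and]
  exact ⟨fun h i hτ => by_contra fun hσ => h i hσ hτ, fun h i hσ hτ => hσ (h hτ)⟩

lemma filter_signVec_eq_zero (x : Fin n → ℝ) :
    Finset.univ.filter (signVec x · = 0) = Finset.univ.filter (x · = 0) :=
  Finset.filter_congr fun _ _ => signVec_apply_eq_zero

lemma isUniform_of_hasMinSupport {W : Matrix (Fin d) (Fin n) ℝ} (hW : W.rank = d)
    (h : ∀ τ ∈ signSet (Set.range Wᵀ.mulVec), τ ≠ 0 →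
      hasMinSupport (signSet (Set.range Wᵀ.mulVec)) τ →
        (Finset.univ.filter (fun i => τ i = 0)).card = d - 1) :
    IsUniform W := by
  intro f hf hdet
  rw [minor, ← det_transpose] at hdet
  obtain ⟨l, hl0, hl⟩ := exists_mulVec_eq_zero_iff.mpr hdet
  have hd : 0 < d := (Function.ne_iff.mp hl0).choose.pos
  obtain ⟨σ, hσ, hσ0, hsub, hmin⟩ := exists_hasMinSupport_le (signSet (Set.range Wᵀ.mulVec))
    ⟨_, ⟨l, rfl⟩, rfl⟩ (mt signVec_eq_zero.mp (transpose_mulVec_ne_zero hW hl0))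
  -- the zeros of `σ` contain those of `Wᵀ l`, among them the `d` columns selected by `f`
  have hzeros : Finset.univ.image f ⊆ Finset.univ.filter (σ · = 0) := by
    refine subset_trans ?_ (setOf_ne_zero_subset_iff.mp hsub)
    rintro _ hj
    obtain ⟨k, -, rfl⟩ := Finset.mem_image.mp hj
    have : (Wᵀ *ᵥ l) (f k) = 0 := congrFun hl k
    simpa [signVec_apply_eq_zero] using this
  have := Finset.card_le_card hzeros
  rw [Finset.card_image_of_injective _ hf.injective, Finset.card_fin, h σ hσ hσ0 hmin] at this
  omega

lemma hasMinSupport_iff_card_zeros {W : Matrix (Fin d) (Fin n) ℝ} (hW : W.rank = d)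
    (hU : IsUniform W) {l : Fin d → ℝ} (hl : Wᵀ *ᵥ l ≠ 0) :
    hasMinSupport (signSet (Set.range Wᵀ.mulVec)) (signVec (Wᵀ *ᵥ l)) ↔
      (Finset.univ.filter (signVec (Wᵀ *ᵥ l) · = 0)).card = d - 1 := by
  have hlt := hU.card_zeros_lt hl
  rw [filter_signVec_eq_zero]
  constructor
  · intro hmin
    by_contra hne
    obtain ⟨j, hj⟩ := Function.ne_iff.mp hl
    -- a covector vanishing at `j` and at all zeros of `Wᵀ l` has strictly smaller support
    obtain ⟨l', hl'0, hl'⟩ := exists_ne_zero_transpose_mulVec_eq_zero_on W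
      (Z := insert j (Finset.univ.filter ((Wᵀ *ᵥ l) · = 0)))
      (by have := Finset.card_insert_le j (Finset.univ.filter ((Wᵀ *ᵥ l) · = 0)); omega)
    have hsub : {i | signVec (Wᵀ *ᵥ l') i ≠ 0} ⊆ {i | signVec (Wᵀ *ᵥ l) i ≠ 0} := by
      rw [setOf_ne_zero_subset_iff, filter_signVec_eq_zero, filter_signVec_eq_zero]
      exact fun i hi =>
        Finset.mem_filter.mpr ⟨Finset.mem_univ i, hl' i (Finset.mem_insert_of_mem hi)⟩
    have := hmin _ ⟨_, ⟨l', rfl⟩, rfl⟩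
      (mt signVec_eq_zero.mp (transpose_mulVec_ne_zero hW hl'0)) hsub
    have hjmem : j ∈ {i | signVec (Wᵀ *ᵥ l') i ≠ 0} := by
      rw [this]
      simpa [signVec_apply_eq_zero] using hj
    exact hjmem (signVec_apply_eq_zero.mpr (hl' j (Finset.mem_insert_self _ _)))
  · rintro hcard _ ⟨_, ⟨l', rfl⟩, rfl⟩ hσ0 hsub
    have hl' : Wᵀ *ᵥ l' ≠ 0 := mt signVec_eq_zero.mpr hσ0
    have hzeros := setOf_ne_zero_subset_iff.mp hsub
    rw [filter_signVec_eq_zero, filter_signVec_eq_zero] at hzeros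
    have heq := Finset.eq_of_subset_of_card_le hzeros (by have := hU.card_zeros_lt hl'; omega)
    refine hsub.antisymm (setOf_ne_zero_subset_iff.mpr ?_)
    rw [filter_signVec_eq_zero, filter_signVec_eq_zero, heq]

end SignVector

open SignVector

theorem stmt17_general {d n : ℕ} (hdn : d ≤ n)
    (S St : Submodule ℝ (Fin n → ℝ))
    (W Wt : Matrix (Fin d) (Fin n) ℝ) (hW : W.rank = d)
    (hkW : LinearMap.ker W.mulVecLin = S) (hkWt : LinearMap.ker Wt.mulVecLin = St) :
    (signSet (S : Set (Fin n → ℝ)) = signSet (St : Set (Fin n → ℝ)) ∧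
     ∀ τ ∈ signSet (orthSet (S : Set (Fin n → ℝ))), τ ≠ 0 →
       (hasMinSupport (signSet (orthSet (S : Set (Fin n → ℝ)))) τ ↔
        (Finset.univ.filter (fun i => τ i = 0)).card = d - 1)) ↔
    ((∀ f : Fin d → Fin n, StrictMono f → 0 < minor W f * minor Wt f) ∨
     (∀ f : Fin d → Fin n, StrictMono f → minor W f * minor Wt f < 0)) := by
  subst hkW hkWt
  rw [orthSet_ker_eq_range]
  constructor
  · rintro ⟨hsign, hmin⟩
    have hUW := isUniform_of_hasMinSupport hW fun τ hτ hτ0 => (hmin τ hτ hτ0).mp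
    have hUWt := hUW.of_signSet_ker_subset hsign.ge
    exact forall_pos_or_forall_neg_of_sign_eq (Fin.strictMono_castLE hdn)
      (fun f hf => mul_ne_zero (hUW f hf) (hUWt f hf))
      (fun f f' hf hf' => eq_of_strictMono_of_forall_succAbove
        (F := fun f => SignType.sign (minor W f * minor Wt f))
        (fun g hg => sign_mul_minor_eq_of_signSet_ker_subset hUW hUWt hsign.le hg) hf hf')
  · intro hminors
    obtain ⟨η, hη⟩ : ∃ η : ℝ, ∀ f : Fin d → Fin n, StrictMono f →
        0 < η * (minor W f * minor Wt f) := by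
      rcases hminors with h | h
      · exact ⟨1, by simpa using h⟩
      · exact ⟨-1, by simpa using h⟩
    have hη' : ∀ f : Fin d → Fin n, StrictMono f → 0 < η * (minor Wt f * minor W f) := by
      simpa only [mul_comm (minor Wt _)] using hη
    refine ⟨(signSet_ker_subset_of_pos_mul_minor hdn hη).antisymm
      (signSet_ker_subset_of_pos_mul_minor hdn hη'), ?_⟩
    rintro _ ⟨_, ⟨l, rfl⟩, rfl⟩ hτ0
    exact hasMinSupport_iff_card_zeros hW (.of_pos_mul_minor hη) (mt signVec_eq_zero.mpr hτ0)

/-- for subspaces `S, S̃` of dimension `n - d` and matrices `W, W̃` of full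
rank `d` with kernels `S, S̃`: (`sign(S) = sign(S̃)` and the nonzero elements of
`sign(S⊥)` of minimal support are exactly those whose zero set has `d - 1` elements) iff
(all products of corresponding maximal minors of `W` and `W̃` are positive, or all are
negative). -/
theorem stmt17 {d n : ℕ} (hdn : d ≤ n)
    (S St : Submodule ℝ (Fin n → ℝ))
    (hS : Module.finrank ℝ S = n - d) (hSt : Module.finrank ℝ St = n - d)
    (W Wt : Matrix (Fin d) (Fin n) ℝ) (hW : W.rank = d) (hWt : Wt.rank = d)
    (hkW : LinearMap.ker W.mulVecLin = S) (hkWt : LinearMap.ker Wt.mulVecLin = St) :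
    (signSet (S : Set (Fin n → ℝ)) = signSet (St : Set (Fin n → ℝ)) ∧
     ∀ τ ∈ signSet (orthSet (S : Set (Fin n → ℝ))), τ ≠ 0 →
       (hasMinSupport (signSet (orthSet (S : Set (Fin n → ℝ)))) τ ↔
        (Finset.univ.filter (fun i => τ i = 0)).card = d - 1)) ↔
    ((∀ f : Fin d → Fin n, StrictMono f → 0 < minor W f * minor Wt f) ∨
     (∀ f : Fin d → Fin n, StrictMono f → minor W f * minor Wt f < 0)) :=
  stmt17_general hdn S St W Wt hW hkW hkWt
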